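/- arXiv:1306.1345 — 5 statements merged into one kernel-verified Lean document; each statement's English description precedes it below -/
import Mathlib

section
/- Local complementation preserves linear rank-width: if H = G * x is obtained from G by local complementation at a vertex x, then lrw(H) = lrw(G). -/
open scoped Classical

variable {V : Type*} [Fintype V] [DecidableEq V]

/-- GF(2)-rank of the adjacency submatrix `A_G[X, V \ X]`. -/
noncomputable def cutrk (G : SimpleGraph V) (X : Finset V) : ℕ :=
  (Matrix.of fun (a : X) (b : (Xᶜ : Finset V)) =>
    if G.Adj a.1 b.1 then (1 : ZMod 2) else 0).rank

/-- The cutrank of a linear ordering of the vertices. -/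
noncomputable def ordCutrk (G : SimpleGraph V) (e : Fin (Fintype.card V) ≃ V) : ℕ :=
  Finset.univ.sup fun i : Fin (Fintype.card V) => cutrk G ((Finset.Iic i).image e)

/-- Linear rank-width: minimum cutrank over all linear orderings of the vertices. -/
noncomputable def lrw (G : SimpleGraph V) : ℕ :=
  ⨅ e : Fin (Fintype.card V) ≃ V, ordCutrk G e

/-- Local complementation at a vertex `x`: toggle all edges among the neighbours of `x`. -/
def localComplement (G : SimpleGraph V) (x : V) : SimpleGraph V where
  Adj a b :=
    (G.Adj a b ∧ ¬(G.Adj x a ∧ G.Adj x b)) ∨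
    (¬ G.Adj a b ∧ a ≠ b ∧ G.Adj x a ∧ G.Adj x b)
  symm := by
    constructor
    intro a b h
    rcases h with ⟨hab, hn⟩ | ⟨hn, hne, hxa, hxb⟩
    · exact Or.inl ⟨hab.symm, fun h => hn ⟨h.2, h.1⟩⟩
    · exact Or.inr ⟨fun h => hn h.symm, hne.symm, hxb, hxa⟩
  loopless := by
    constructor
    intro a h
    rcases h with ⟨hab, _⟩ | ⟨_, hne, _⟩
    · exact G.loopless.irrefl a hab
    · exact hne rfl

/-!
Fix a cut `(X, V \ X)` and write `a_v` for the GF(2)-row of `v` in the adjacency matrix. Local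
complementation at `x` adds the rank-one matrix `a_x a_xᵀ` off the diagonal, so on the cut matrix
`A[X, V \ X]` it adds row `x` to every row of a neighbour of `x` when `x ∈ X`, and column `x` to
every column of a neighbour of `x` otherwise. Since `x` is not its own neighbour, this is
multiplication by `1 + u e_xᵀ` with `e_xᵀ u = 0`, an invertible matrix. So every cut-rank, hence
the width of every ordering and the linear rank-width, is unchanged.
-/

namespace Matrix

variable {m n R : Type*} [Fintype n] [CommRing R]

theorem det_one_add_vecMulVec [Fintype m] [DecidableEq m] (u v : m → R) :
    (1 + vecMulVec u v).det = 1 + v ⬝ᵥ u := by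
  rw [vecMulVec_eq Unit, det_one_add_replicateCol_mul_replicateRow]

theorem rank_add_vecMulVec_row [Fintype m] [DecidableEq m] (M : Matrix m n R) {u : m → R}
    {i : m} (hu : u i = 0) : (M + vecMulVec u (M.row i)).rank = M.rank := by
  have hdet : IsUnit (1 + vecMulVec u (Pi.single i 1)).det := by
    simp [det_one_add_vecMulVec, hu]
  rw [← rank_mul_eq_right_of_isUnit_det _ M hdet, Matrix.add_mul, Matrix.one_mul, vecMulVec_mul,
    single_one_vecMul]

theorem rank_add_vecMulVec_col [DecidableEq n] (M : Matrix m n R) {v : n → R} {j : n}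
    (hv : v j = 0) : (M + vecMulVec (M.col j) v).rank = M.rank := by
  have hdet : IsUnit (1 + vecMulVec (Pi.single j 1) v).det := by
    simp [det_one_add_vecMulVec, hv]
  rw [← rank_mul_eq_left_of_isUnit_det _ M hdet, Matrix.mul_add, Matrix.mul_one, mul_vecMulVec,
    mulVec_single_one]

end Matrix

omit [Fintype V] [DecidableEq V] in
theorem localComplement_adj_indicator (G : SimpleGraph V) (x : V) {a b : V} (hab : a ≠ b) :
    (if (localComplement G x).Adj a b then 1 else 0 : ZMod 2) =
      (if G.Adj a b then 1 else 0) +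
        (if G.Adj x a then 1 else 0) * (if G.Adj x b then 1 else 0) := by
  simp only [localComplement, ne_eq, hab, not_false_eq_true, true_and]
  split_ifs <;> first | rfl | (exfalso; tauto)

section CutMatrix

variable (G : SimpleGraph V) {x : V}

noncomputable def cutMatrix (X : Finset V) : Matrix X (Xᶜ : Finset V) (ZMod 2) :=
  Matrix.of fun a b => if G.Adj a.1 b.1 then 1 else 0

theorem cutrk_eq_rank_cutMatrix (X : Finset V) : cutrk G X = (cutMatrix G X).rank :=
  rfl

theorem cutMatrix_localComplement_of_mem {X : Finset V} (hx : x ∈ X) :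
    cutMatrix (localComplement G x) X = cutMatrix G X +
      Matrix.vecMulVec (fun a : X => if G.Adj x a then 1 else 0)
        ((cutMatrix G X).row ⟨x, hx⟩) := by
  ext a b
  have hab : a.1 ≠ b.1 := ne_of_mem_of_not_mem a.2 (Finset.mem_compl.mp b.2)
  exact localComplement_adj_indicator G x hab

theorem cutMatrix_localComplement_of_notMem {X : Finset V} (hx : x ∉ X) :
    cutMatrix (localComplement G x) X = cutMatrix G X +
      Matrix.vecMulVec ((cutMatrix G X).col ⟨x, Finset.mem_compl.mpr hx⟩)
        (fun b : (Xᶜ : Finset V) => if G.Adj x b then 1 else 0) := by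
  ext a b
  have hab : a.1 ≠ b.1 := ne_of_mem_of_not_mem a.2 (Finset.mem_compl.mp b.2)
  simp only [Matrix.add_apply, Matrix.vecMulVec_apply, Matrix.col_apply, cutMatrix,
    Matrix.of_apply]
  rw [localComplement_adj_indicator G x hab, G.adj_comm x a]

end CutMatrix

theorem cutrk_localComplement (G : SimpleGraph V) (x : V) (X : Finset V) :
    cutrk (localComplement G x) X = cutrk G X := by
  rw [cutrk_eq_rank_cutMatrix, cutrk_eq_rank_cutMatrix]
  by_cases hx : x ∈ X
  · rw [cutMatrix_localComplement_of_mem G hx]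
    exact Matrix.rank_add_vecMulVec_row _ (by simp)
  · rw [cutMatrix_localComplement_of_notMem G hx]
    exact Matrix.rank_add_vecMulVec_col _ (by simp)

theorem stmt3 (G : SimpleGraph V) (x : V) :
    lrw (localComplement G x) = lrw G := by
  simp only [lrw, ordCutrk, cutrk_localComplement]
end

section
/- Every caterpillar has linear rank-width at most 1. -/
open scoped Classical

variable {V : Type*} [Fintype V] [DecidableEq V]

/-- A graph is "path-like" if it is an acyclic, preconnected graph of maximum degree
at most 2, i.e. a path, a single vertex, or the empty graph. -/
def IsPathish {W : Type*} (H : SimpleGraph W) : Prop :=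
  H.Preconnected ∧ H.IsAcyclic ∧ ∀ w : W, (H.neighborSet w).ncard ≤ 2

/-- A caterpillar: a tree in which the removal of all leaves results in a path
(or an empty or single-vertex graph). -/
def IsCaterpillar (G : SimpleGraph V) : Prop :=
  G.IsTree ∧ IsPathish (G.induce {v | (G.neighborSet v).ncard ≠ 1})

/-!
Number the spine `s₀, s₁, …` along its path and list the vertices as: the leaves of `s₀`, then
`s₀`, then the leaves of `s₁`, then `s₁`, and so on. Every edge joins a leaf to its spine vertex or
two consecutive spine vertices, so all edges leaving a prefix of this order end in the same vertex
and the cut matrix of the prefix is a single column, of rank at most one. The numbering of the spine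
is read off a Hamiltonian path, which exists because a longest path in a tree of maximum degree two
cannot be extended. Graphs on at most two vertices need no argument: every cut has one side of size
at most one.
-/

open SimpleGraph Function Finset

lemma cutrk_le_card_compl (G : SimpleGraph V) (X : Finset V) : cutrk G X ≤ #Xᶜ :=
  (Matrix.rank_le_card_width _).trans (by simp)

lemma cutrk_le_one_of_forall_adj_eq {G : SimpleGraph V} {X : Finset V} (w : V)
    (hw : ∀ a ∈ X, ∀ b ∉ X, G.Adj a b → b = w) : cutrk G X ≤ 1 := by
  have hM : (Matrix.of fun (a : X) (b : (Xᶜ : Finset V)) =>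
      if G.Adj a.1 b.1 then (1 : ZMod 2) else 0) =
      Matrix.vecMulVec (fun a : X => if G.Adj a.1 w then 1 else 0)
        (fun b : (Xᶜ : Finset V) => if b.1 = w then 1 else 0) := by
    ext a b
    by_cases hb : b.1 = w
    · simp [Matrix.vecMulVec_apply, hb]
    · have : ¬ G.Adj a b := fun h => hb (hw a a.2 b (Finset.mem_compl.mp b.2) h)
      simp [Matrix.vecMulVec_apply, hb, this]
  unfold cutrk
  rw [hM]
  exact Matrix.rank_vecMulVec_le _ _

lemma lrw_le_card_sub_one (G : SimpleGraph V) : lrw G ≤ Fintype.card V - 1 := by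
  let e := (Fintype.equivFin V).symm
  refine (ciInf_le' _ e).trans (Finset.sup_le fun i _ => (cutrk_le_card_compl G _).trans ?_)
  have hi : e i ∈ (Iic i).image e := mem_image_of_mem e (mem_Iic.mpr le_rfl)
  have hpos := card_pos.mpr ⟨_, hi⟩
  rw [card_compl]
  omega

lemma lrw_le_one_of_injective {α : Type*} [LinearOrder α] (G : SimpleGraph V) (f : V → α)
    (hf : Injective f) (h : ∀ x, ∃ w, ∀ a b, G.Adj a b → f a ≤ f x → f x < f b → b = w) :
    lrw G ≤ 1 := by
  let _ : LinearOrder V := LinearOrder.lift' f hf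
  let e : Fin (Fintype.card V) ≃o V := Fintype.orderIsoFinOfCardEq V rfl
  refine (ciInf_le' _ e.toEquiv).trans (Finset.sup_le fun i _ => ?_)
  have hmem : ∀ v, v ∈ (Iic i).image e.toEquiv ↔ f v ≤ f (e i) := fun v => by
    refine ⟨fun hv => ?_, fun hv =>
      mem_image.mpr ⟨e.symm v, mem_Iic.mpr (e.symm_apply_le.mpr hv), by simp⟩⟩
    obtain ⟨j, hj, rfl⟩ := mem_image.mp hv
    exact e.monotone (mem_Iic.mp hj)
  obtain ⟨w, hw⟩ := h (e i)
  exact cutrk_le_one_of_forall_adj_eq w fun a ha b hb hab =>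
    hw a b hab ((hmem a).1 ha) (not_le.1 (mt (hmem b).2 hb))

namespace SimpleGraph

variable {W : Type*} {H : SimpleGraph W}

lemma IsAcyclic.eq_add_one_of_adj_getVert (hH : H.IsAcyclic) {u v : W} {p : H.Walk u v}
    (hp : p.IsPath) {i j : ℕ} (hij : i < j) (hj : j ≤ p.length)
    (hadj : H.Adj (p.getVert i) (p.getVert j)) : j = i + 1 := by
  have hmem : p.getVert j ∈ (p.drop i).support := by
    rw [show j = i + (j - i) by omega, ← Walk.drop_getVert]
    exact Walk.getVert_mem_support _ _
  have hsnd := hH.eq_snd_of_adj_start (hp.drop i) hadj hmem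
  rw [Walk.snd, Walk.drop_getVert] at hsnd
  exact hp.getVert_injOn (by simp; omega) (by simp; omega) hsnd

lemma Preconnected.card_le_two_of_neighborSet_eq [Fintype W] (hH : H.Preconnected) {u v : W}
    (hu : H.neighborSet u = {v}) (hv : H.neighborSet v = {u}) : Fintype.card W ≤ 2 := by
  have hmem : ∀ {w}, H.Walk w u → w = u ∨ w = v := by
    intro w p
    induction p with
    | nil => exact .inl rfl
    | cons h _ ih =>
      rcases ih hu hv with rfl | rfl
      · exact .inr (by simpa [hu] using (mem_neighborSet _ _ _).mpr h.symm)
      · exact .inl (by simpa [hv] using (mem_neighborSet _ _ _).mpr h.symm)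
  classical
  calc Fintype.card W ≤ #{u, v} :=
        card_le_card fun w _ => by rcases hmem (hH w u).some with rfl | rfl <;> simp
    _ ≤ 2 := card_le_two

lemma IsPathish.exists_longer_path [Finite W] (hH : IsPathish H) {u v : W} {p : H.Walk u v}
    (hp : p.IsPath) {x : W} (hx : x ∉ p.support) :
    ∃ (a b : W) (q : H.Walk a b), q.IsPath ∧ p.length < q.length := by
  obtain ⟨⟨⟨z, y⟩, hzy⟩, -, hz, hy⟩ :=
    (hH.1 u x).some.exists_boundary_dart {w | w ∈ p.support} p.start_mem_support hx
  simp only [Set.mem_ofPred_eq] at hz hy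
  by_cases hzu : z = u
  · subst hzu
    exact ⟨y, v, .cons hzy.symm p, hp.cons hy, by simp⟩
  by_cases hzv : z = v
  · subst hzv
    exact ⟨u, y, p.concat hzy, hp.concat hy hzy, by simp⟩
  -- an interior vertex of `p` adjacent to `y` would have three neighbours
  exfalso
  obtain ⟨k, rfl, hk⟩ := Walk.mem_support_iff_exists_getVert.mp hz
  have hk0 : k ≠ 0 := by rintro rfl; simp at hzu
  have hkl : k ≠ p.length := by rintro rfl; simp at hzv
  have hprev : H.Adj (p.getVert k) (p.getVert (k - 1)) := by
    simpa [Nat.sub_add_cancel (Nat.pos_of_ne_zero hk0)] using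
      (p.adj_getVert_succ (i := k - 1) (by omega)).symm
  have hnext : H.Adj (p.getVert k) (p.getVert (k + 1)) := p.adj_getVert_succ (by omega)
  have hne : p.getVert (k - 1) ≠ p.getVert (k + 1) := fun h => by
    have := hp.getVert_injOn (by simp; omega) (by simp; omega) h
    omega
  have hy_ne : ∀ i, y ≠ p.getVert i := fun i h => hy (h ▸ p.getVert_mem_support i)
  have hsub : {p.getVert (k - 1), p.getVert (k + 1), y} ⊆ H.neighborSet (p.getVert k) := by
    rintro w (rfl | rfl | rfl)
    exacts [hprev, hnext, hzy]
  have h3 : ({p.getVert (k - 1), p.getVert (k + 1), y} : Set W).ncard = 3 :=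
    Set.ncard_eq_three.mpr ⟨_, _, _, hne, (hy_ne _).symm, (hy_ne _).symm, rfl⟩
  have := Set.ncard_le_ncard hsub (Set.toFinite _)
  have := hH.2.2 (p.getVert k)
  omega

lemma IsPathish.exists_isHamiltonian [Fintype W] [Nonempty W] [DecidableEq W]
    (hH : IsPathish H) : ∃ (a b : W) (p : H.Walk a b), p.IsHamiltonian := by
  by_contra! hno
  have hlong : ∀ n, ∃ (a b : W) (p : H.Walk a b), p.IsPath ∧ n ≤ p.length := by
    intro n
    induction n with
    | zero =>
      obtain ⟨a⟩ := ‹Nonempty W›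
      exact ⟨a, a, .nil, .nil, le_rfl⟩
    | succ n ih =>
      obtain ⟨a, b, p, hp, hn⟩ := ih
      obtain ⟨x, hx⟩ : ∃ x, x ∉ p.support := by
        simpa [hp.isHamiltonian_iff] using hno a b p
      obtain ⟨c, d, q, hq, hlt⟩ := hH.exists_longer_path hp hx
      exact ⟨c, d, q, hq, by omega⟩
  obtain ⟨a, b, p, hp, hn⟩ := hlong (Fintype.card W)
  exact hn.not_gt hp.length_lt

lemma IsPathish.exists_injective_adj_succ [Fintype W] (hH : IsPathish H) :
    ∃ f : W → ℕ, Injective f ∧ ∀ x y, H.Adj x y → f y = f x + 1 ∨ f x = f y + 1 := by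
  classical
  cases isEmpty_or_nonempty W
  · exact ⟨isEmptyElim, fun x => isEmptyElim x, fun x => isEmptyElim x⟩
  obtain ⟨a, b, p, hp⟩ := hH.exists_isHamiltonian
  choose f hf hfl using fun w => Walk.mem_support_iff_exists_getVert.mp (hp.mem_support w)
  have hconsec : ∀ x y, H.Adj x y → f x < f y → f y = f x + 1 := fun x y hxy hlt =>
    hH.2.1.eq_add_one_of_adj_getVert hp.isPath hlt (hfl y) (by rwa [hf, hf])
  have hinj : Injective f := fun x y hxy => by simpa [hf] using congrArg p.getVert hxy
  refine ⟨f, hinj, fun x y hxy => ?_⟩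
  rcases lt_or_gt_of_ne (hinj.ne hxy.ne) with hlt | hlt
  exacts [.inl (hconsec x y hxy hlt), .inr (hconsec y x hxy.symm hlt)]

end SimpleGraph

structure CaterpillarLayout {W : Type*} (G : SimpleGraph W) where
  spine : Set W
  attach : W → spine
  attach_spine : ∀ v : spine, attach v = v
  neighborSet_eq_attach : ∀ v ∉ spine, G.neighborSet v = {(attach v : W)}
  index : spine → ℕ
  index_injective : Injective index
  index_adj : ∀ x y : spine, G.Adj x y → index y = index x + 1 ∨ index x = index y + 1

namespace CaterpillarLayout

variable {W : Type*} {G : SimpleGraph W} (L : CaterpillarLayout G)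

noncomputable def pos (v : W) : ℕ := 2 * L.index (L.attach v) + if v ∈ L.spine then 1 else 0

lemma pos_spine (c : L.spine) : L.pos c = 2 * L.index c + 1 := by
  simp [pos, L.attach_spine c]

lemma pos_of_notMem {v : W} (hv : v ∉ L.spine) : L.pos v = 2 * L.index (L.attach v) := by
  simp [pos, hv]

lemma eq_attach_of_adj {v w : W} (hv : v ∉ L.spine) (h : G.Adj v w) : w = L.attach v := by
  simpa [L.neighborSet_eq_attach v hv] using (mem_neighborSet _ _ _).mpr h

lemma eq_of_pos_eq {v : W} (c : L.spine) (h : L.pos v = L.pos c) : v = c := by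
  rw [L.pos_spine c] at h
  by_cases hv : v ∈ L.spine
  · rw [L.pos_spine ⟨v, hv⟩] at h
    exact congrArg Subtype.val (L.index_injective (by omega : L.index ⟨v, hv⟩ = L.index c))
  · rw [L.pos_of_notMem hv] at h
    omega

lemma mem_spine_and_pos_eq_of_adj {a b : W} (h : G.Adj a b) (hle : L.pos a ≤ L.pos b) :
    b ∈ L.spine ∧ (L.pos b = L.pos a + 1 ∨ a ∈ L.spine ∧ L.pos b = L.pos a + 2) := by
  by_cases ha : a ∈ L.spine
  · by_cases hb : b ∈ L.spine
    · have hpa : L.pos a = _ := L.pos_spine ⟨a, ha⟩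
      have hpb : L.pos b = _ := L.pos_spine ⟨b, hb⟩
      have hne : L.index ⟨a, ha⟩ ≠ L.index ⟨b, hb⟩ :=
        L.index_injective.ne fun hab => h.ne (congrArg Subtype.val hab)
      refine ⟨hb, .inr ⟨ha, ?_⟩⟩
      rcases L.index_adj ⟨a, ha⟩ ⟨b, hb⟩ h with hi | hi <;> omega
    · have hpa := L.pos_spine (L.attach b)
      rw [← L.eq_attach_of_adj hb h.symm] at hpa
      rw [L.pos_of_notMem hb] at hle
      omega
  · obtain rfl := L.eq_attach_of_adj ha h
    refine ⟨(L.attach a).2, .inl ?_⟩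
    rw [L.pos_spine, L.pos_of_notMem ha]

section Key

variable [Fintype W]

noncomputable def key (v : W) : ℕ ×ₗ Fin (Fintype.card W) := toLex (L.pos v, Fintype.equivFin W v)

lemma key_injective : Injective L.key := fun _ _ h =>
  (Fintype.equivFin W).injective (Prod.ext_iff.mp (toLex.injective h)).2

lemma pos_le_of_key_le {u w : W} (h : L.key u ≤ L.key w) : L.pos u ≤ L.pos w :=
  Prod.Lex.monotone_fst _ _ h

lemma eq_of_adj_of_key_lt {a b a' b' : W} (hab : G.Adj a b) (hab' : G.Adj a' b')
    (ha : L.key a < L.key b) (ha' : L.key a' < L.key b')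
    (h : L.key a < L.key b') (h' : L.key a' < L.key b) : b = b' := by
  wlog hle : L.key b ≤ L.key b' generalizing a b a' b'
  · exact (this hab' hab ha' ha h' h (le_of_not_ge hle)).symm
  rcases hle.eq_or_lt with heq | hlt
  · exact L.key_injective heq
  exfalso
  obtain ⟨hb, -⟩ := L.mem_spine_and_pos_eq_of_adj hab (L.pos_le_of_key_le ha.le)
  have hpb : L.pos b = _ := L.pos_spine ⟨b, hb⟩
  have h₁ : L.pos a' < L.pos b := (L.pos_le_of_key_le h'.le).lt_of_ne fun hp =>
    h'.ne (congrArg L.key (L.eq_of_pos_eq ⟨b, hb⟩ hp))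
  have h₂ : L.pos b < L.pos b' := (L.pos_le_of_key_le hlt.le).lt_of_ne fun hp =>
    hlt.ne (congrArg L.key (L.eq_of_pos_eq ⟨b, hb⟩ hp.symm).symm)
  rcases (L.mem_spine_and_pos_eq_of_adj hab' (by omega)).2 with hp | ⟨ha', hp⟩
  · omega
  · have hpa' : L.pos a' = _ := L.pos_spine ⟨a', ha'⟩
    omega

end Key

lemma lrw_le_one {V : Type*} [Fintype V] [DecidableEq V] {G : SimpleGraph V}
    (L : CaterpillarLayout G) : lrw G ≤ 1 := by
  refine lrw_le_one_of_injective G L.key L.key_injective fun x => ?_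
  by_cases hcross : ∃ a b, G.Adj a b ∧ L.key a ≤ L.key x ∧ L.key x < L.key b
  · obtain ⟨a₀, b₀, hab₀, ha₀, hb₀⟩ := hcross
    exact ⟨b₀, fun a b hab ha hb => L.eq_of_adj_of_key_lt hab hab₀ (ha.trans_lt hb)
      (ha₀.trans_lt hb₀) (ha.trans_lt hb₀) (ha₀.trans_lt hb)⟩
  · push Not at hcross
    exact ⟨x, fun a b hab ha hb => absurd hb (hcross a b hab ha).not_gt⟩

end CaterpillarLayout

lemma IsCaterpillar.nonempty_layout {W : Type*} [Fintype W] {G : SimpleGraph W}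
    (h : IsCaterpillar G) (hcard : 2 < Fintype.card W) : Nonempty (CaterpillarLayout G) := by
  obtain ⟨htree, hpath⟩ := h
  set S := {v | (G.neighborSet v).ncard ≠ 1}
  obtain ⟨index, hinj, hadj⟩ := hpath.exists_injective_adj_succ
  -- the neighbour of a leaf is not a leaf, as the tree has more than two vertices
  have hattach : ∀ v, ∃ s : S, (v ∈ S → (s : W) = v) ∧ (v ∉ S → G.neighborSet v = {(s : W)}) := by
    intro v
    by_cases hv : v ∈ S
    · exact ⟨⟨v, hv⟩, fun _ => rfl, absurd hv⟩
    obtain ⟨s, hs⟩ := Set.ncard_eq_one.mp (not_not.mp hv)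
    refine ⟨⟨s, fun hs1 => ?_⟩, fun h => absurd h hv, fun _ => hs⟩
    obtain ⟨t, ht⟩ := Set.ncard_eq_one.mp hs1
    have hvs : v ∈ G.neighborSet s := (hs ▸ Set.mem_singleton s : s ∈ G.neighborSet v).symm
    obtain rfl : t = v := by rwa [ht, Set.mem_singleton_iff, eq_comm] at hvs
    exact (htree.connected.preconnected.card_le_two_of_neighborSet_eq hs ht).not_gt hcard
  choose attach hattach using hattach
  exact ⟨{ spine := S
           attach := attach
           attach_spine := fun v => Subtype.ext ((hattach v).1 v.2)
           neighborSet_eq_attach := fun v hv => (hattach v).2 hv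
           index := index
           index_injective := hinj
           index_adj := hadj }⟩

theorem stmt7 (G : SimpleGraph V) (h : IsCaterpillar G) : lrw G ≤ 1 := by
  rcases le_or_gt (Fintype.card V) 2 with hcard | hcard
  · exact (lrw_le_card_sub_one G).trans (by omega)
  · obtain ⟨L⟩ := h.nonempty_layout hcard
    exact L.lrw_le_one
end

section
/- The Net graph (a triangle with one pendant vertex attached to each of its three vertices) has linear rank-width exactly 2. -/
open scoped Classical

variable {V : Type*} [Fintype V] [DecidableEq V]

/-- The Net graph: a triangle `{0,1,2}` with pendant vertices `3, 4, 5` attached to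
`0, 1, 2` respectively. -/
def netGraph : SimpleGraph (Fin 6) :=
  SimpleGraph.fromRel fun a b =>
    (a = 0 ∧ b = 1) ∨ (a = 1 ∧ b = 2) ∨ (a = 0 ∧ b = 2) ∨
    (a = 0 ∧ b = 3) ∨ (a = 1 ∧ b = 4) ∨ (a = 2 ∧ b = 5)

/-! In the order `a', a, b', b, c, c'` every initial segment contains at most two vertices with a
neighbour outside it, and a cut's rank is at most the number of such vertices (the other rows
vanish). Conversely, every order has an initial segment `X` of size 3, and in the Net one always
finds `a, b ∈ X` and `c, d ∉ X` with `a ~ c`, `b ~ d`, `a ≁ d`: a triangular, hence nonsingular,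
`2 × 2` minor. -/

open Finset

theorem Matrix.two_le_rank_of_det_fin_two_ne_zero {m n R : Type*} [Fintype n] [CommRing R]
    [IsDomain R] (M : Matrix m n R) (i j : m) (k l : n)
    (h : M i k * M j l - M i l * M j k ≠ 0) : 2 ≤ M.rank := by
  have hminor : (M.submatrix ![i, j] ![k, l]).rank = 2 := by
    rw [Matrix.rank_of_det_ne_zero, Fintype.card_fin]
    rw [Matrix.det_fin_two]
    simpa using h
  exact hminor ▸ M.rank_submatrix_le _ _

section CutRank

variable (G : SimpleGraph V)

def cutBoundary [DecidableRel G.Adj] (X : Finset V) : Finset V :=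
  {x ∈ X | ∃ y ∉ X, G.Adj x y}

theorem cutrk_le_card_cutBoundary [DecidableRel G.Adj] (X : Finset V) :
    cutrk G X ≤ #(cutBoundary G X) := by
  calc cutrk G X ≤ #((cutBoundary G X).subtype (· ∈ X)) := by
        refine Matrix.rank_le_card_of_support_subset _ _ fun x hx => ?_
        obtain ⟨y, hy⟩ := Function.ne_iff.1 hx
        have hxy : G.Adj x y := by by_contra h; simp [Matrix.row, h] at hy
        exact mem_subtype.2 (mem_filter.2 ⟨x.2, y, mem_compl.1 y.2, hxy⟩)
    _ = #(cutBoundary G X) := by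
        rw [card_subtype]
        exact congrArg card (filter_true_of_mem fun x hx => (mem_filter.1 hx).1)

theorem two_le_cutrk_of_adj {X : Finset V} {a b c d : V} (ha : a ∈ X) (hb : b ∈ X)
    (hc : c ∉ X) (hd : d ∉ X) (hac : G.Adj a c) (hbd : G.Adj b d) (had : ¬G.Adj a d) :
    2 ≤ cutrk G X := by
  refine Matrix.two_le_rank_of_det_fin_two_ne_zero _ ⟨a, ha⟩ ⟨b, hb⟩
    ⟨c, mem_compl.2 hc⟩ ⟨d, mem_compl.2 hd⟩ ?_
  simp [hac, hbd, had]

theorem lrw_le_of_forall_cutrk_le (e : Fin (Fintype.card V) ≃ V) {r : ℕ}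
    (h : ∀ i, cutrk G ((Iic i).image e) ≤ r) : lrw G ≤ r :=
  (ciInf_le (OrderBot.bddBelow _) e).trans (Finset.sup_le fun i _ => h i)

theorem le_lrw_of_forall_card_eq {k r : ℕ} (hk : k < Fintype.card V)
    (h : ∀ X : Finset V, #X = k + 1 → r ≤ cutrk G X) : r ≤ lrw G := by
  have : Nonempty (Fin (Fintype.card V) ≃ V) := ⟨(Fintype.equivFin V).symm⟩
  refine le_ciInf fun e => (h ((Iic ⟨k, hk⟩).image e) ?_).trans
    (le_sup (f := fun i => cutrk G ((Iic i).image e)) (mem_univ _))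
  rw [card_image_of_injective _ e.injective, Fin.card_Iic]

end CutRank

instance : DecidableRel netGraph.Adj := by
  unfold netGraph; infer_instance

/-- The order `a', a, b', b, c, c'`. -/
def netOrder : Fin (Fintype.card (Fin 6)) ≃ Fin 6 :=
  (finCongr (Fintype.card_fin 6)).trans
    ⟨![3, 0, 4, 1, 2, 5], ![1, 3, 4, 0, 2, 5], by decide, by decide⟩

theorem card_cutBoundary_netOrder_le (i : Fin (Fintype.card (Fin 6))) :
    #(cutBoundary netGraph ((Iic i).image netOrder)) ≤ 2 := by
  revert i; decide

theorem netGraph_exists_cross_of_card_eq_three (X : Finset (Fin 6)) (hX : #X = 3) :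
    ∃ a ∈ X, ∃ b ∈ X, ∃ c ∉ X, ∃ d ∉ X,
      netGraph.Adj a c ∧ netGraph.Adj b d ∧ ¬netGraph.Adj a d := by
  revert X; decide

theorem stmt11 : lrw netGraph = 2 := by
  refine le_antisymm (lrw_le_of_forall_cutrk_le _ netOrder fun i => ?_) ?_
  · exact (cutrk_le_card_cutBoundary _ _).trans (card_cutBoundary_netOrder_le i)
  · refine le_lrw_of_forall_card_eq _ (k := 2) (by simp) fun X hX => ?_
    obtain ⟨a, ha, b, hb, c, hc, d, hd, hac, hbd, had⟩ :=
      netGraph_exists_cross_of_card_eq_three X hX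
    exact two_le_cutrk_of_adj _ ha hb hc hd hac hbd had
end

section
/- In a connected graph G with a linear ordering x_1,…,x_n of cutrank at most 1, every strong split of G equals {X_i, complement of X_i} for some 1 < i < n, where X_i = {x_1,…,x_i}. -/
open scoped Classical

variable {V : Type*} [Fintype V] [DecidableEq V]

/-- `{X, Xᶜ}` is a split: both sides have at least two vertices and the crossing
adjacency matrix has GF(2)-rank 1. -/
def IsSplit (G : SimpleGraph V) (X : Finset V) : Prop :=
  2 ≤ X.card ∧ 2 ≤ Xᶜ.card ∧ cutrk G X = 1

/-- The bipartitions `{X, Xᶜ}` and `{Y, Yᶜ}` overlap. -/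
def Overlap (X Y : Finset V) : Prop :=
  (X ∩ Y).Nonempty ∧ (X \ Y).Nonempty ∧ (Y \ X).Nonempty ∧ (Xᶜ ∩ Yᶜ).Nonempty

/-- A split is strong if no other split overlaps it. -/
def IsStrongSplit (G : SimpleGraph V) (X : Finset V) : Prop :=
  IsSplit G X ∧ ∀ Y : Finset V, IsSplit G Y → Y ≠ X → Y ≠ Xᶜ → ¬ Overlap X Y

set_option linter.unusedSectionVars false

lemma memP (e : Fin (Fintype.card V) ≃ V) (k : ℕ) (v : V) :
    v ∈ (Finset.univ.filter fun j : Fin (Fintype.card V) => j.val < k).image e ↔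
      (e.symm v).val < k := by
  simp only [Finset.mem_image, Finset.mem_filter, Finset.mem_univ, true_and]
  constructor
  · rintro ⟨j, hj, rfl⟩; simpa using hj
  · intro h; exact ⟨e.symm v, h, e.apply_symm_apply v⟩

lemma cardP_le (e : Fin (Fintype.card V) ≃ V) (k : ℕ) :
    ((Finset.univ.filter fun j : Fin (Fintype.card V) => j.val < k).image e).card ≤ k := by
  refine le_trans Finset.card_image_le ?_
  calc (Finset.univ.filter fun j : Fin (Fintype.card V) => j.val < k).card
      = ((Finset.univ.filter fun j : Fin (Fintype.card V) => j.val < k).image Fin.val).card :=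
        (Finset.card_image_of_injective _ Fin.val_injective).symm
    _ ≤ (Finset.range k).card := Finset.card_le_card (by
        intro x hx
        simp only [Finset.mem_image, Finset.mem_filter, Finset.mem_univ, true_and,
          Finset.mem_range] at hx ⊢
        obtain ⟨j, hj, rfl⟩ := hx
        exact hj)
    _ = k := Finset.card_range k

lemma overlap_compl_left {X Y : Finset V} (h : Overlap X Y) : Overlap Xᶜ Y := by
  obtain ⟨⟨a, ha⟩, ⟨b, hb⟩, ⟨c, hc⟩, ⟨d, hd⟩⟩ := h
  simp only [Finset.mem_inter, Finset.mem_sdiff, Finset.mem_compl] at ha hb hc hd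
  refine ⟨⟨c, ?_⟩, ⟨d, ?_⟩, ⟨a, ?_⟩, ⟨b, ?_⟩⟩ <;>
    simp only [Finset.mem_inter, Finset.mem_sdiff, Finset.mem_compl, compl_compl] <;> tauto

lemma walk_cross {G : SimpleGraph V} (A : Finset V) :
    ∀ {a b : V} (_ : G.Walk a b), a ∈ A → b ∉ A →
      ∃ x y, x ∈ A ∧ y ∉ A ∧ G.Adj x y := by
  intro a b p
  induction p with
  | nil => intro h h'; exact absurd h h'
  | @cons a c b h p ih =>
    intro ha hb
    by_cases hc : c ∈ A
    · exact ih hc hb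
    · exact ⟨a, c, ha, hc, h⟩

lemma cutrk_pos {G : SimpleGraph V} (hG : G.Connected) (A : Finset V)
    (hA : A.Nonempty) (hA' : Aᶜ.Nonempty) : cutrk G A ≠ 0 := by
  obtain ⟨a, ha⟩ := hA
  obtain ⟨b, hb⟩ := hA'
  rw [Finset.mem_compl] at hb
  obtain ⟨x, y, hx, hy, hxy⟩ := walk_cross A ((hG.preconnected a b).some) ha hb
  intro h0
  unfold cutrk Matrix.rank at h0
  rw [Submodule.finrank_eq_zero] at h0
  have : (Matrix.of fun (p : A) (q : (Aᶜ : Finset V)) =>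
      if G.Adj p.1 q.1 then (1 : ZMod 2) else 0).mulVecLin
      (Pi.single ⟨y, Finset.mem_compl.2 hy⟩ 1) ∈ (⊥ : Submodule (ZMod 2) _) := by
    rw [← h0]; exact LinearMap.mem_range_self _ _
  rw [Submodule.mem_bot] at this
  have h2 := congrFun this ⟨x, hx⟩
  rw [Matrix.mulVecLin_apply, Matrix.mulVec_single] at h2
  simp [hxy] at h2

lemma key (G : SimpleGraph V) (hG : G.Connected)
    (e : Fin (Fintype.card V) ≃ V)
    (h1 : ∀ i : Fin (Fintype.card V), cutrk G ((Finset.Iic i).image e) ≤ 1)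
    (X : Finset V) (hX2 : 2 ≤ X.card) (hXc2 : 2 ≤ Xᶜ.card)
    (hstr : ∀ Y : Finset V, IsSplit G Y → Y ≠ X → Y ≠ Xᶜ → ¬ Overlap X Y)
    (hpos : 0 < Fintype.card V) (h0 : e ⟨0, hpos⟩ ∈ X) :
    ∃ k : ℕ, 1 < k ∧ k < Fintype.card V ∧
      (Finset.univ.filter fun j : Fin (Fintype.card V) => j.val < k).image e = X := by
  have hn4 : 4 ≤ Fintype.card V := by
    have := Finset.card_add_card_compl X
    omega
  -- the set of indices mapping outside X
  have hS : (Finset.univ.filter fun i : Fin (Fintype.card V) => e i ∉ X).Nonempty := by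
    obtain ⟨v, hv⟩ := Finset.card_pos.mp (by omega : 0 < Xᶜ.card)
    rw [Finset.mem_compl] at hv
    exact ⟨e.symm v, by simp [hv]⟩
  set m : Fin (Fintype.card V) :=
    (Finset.univ.filter fun i : Fin (Fintype.card V) => e i ∉ X).min' hS with hmdef
  have hmX : e m ∉ X := by
    have := Finset.min'_mem _ hS
    rw [Finset.mem_filter] at this
    exact this.2
  have hlt : ∀ j : Fin (Fintype.card V), j.val < m.val → e j ∈ X := by
    intro j hj
    by_contra hc
    have hjm : j ∈ Finset.univ.filter fun i : Fin (Fintype.card V) => e i ∉ X := by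
      simp only [Finset.mem_filter, Finset.mem_univ, true_and]; exact hc
    have h := Finset.min'_le _ j hjm
    rw [← hmdef, Fin.le_def] at h
    omega
  have hm0 : 0 < m.val := by
    rcases Nat.eq_zero_or_pos m.val with h | h
    · exact absurd (show e m ∈ X by rw [show m = ⟨0, hpos⟩ from Fin.ext h]; exact h0) hmX
    · exact h
  have hQX : (Finset.univ.filter fun j : Fin (Fintype.card V) => j.val < m.val).image e ⊆ X := by
    intro v hv
    rw [memP] at hv
    have := hlt (e.symm v) hv
    rwa [e.apply_symm_apply] at this
  have hXc_sub : ∀ v ∈ Xᶜ, m.val ≤ (e.symm v).val := by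
    intro v hv
    by_contra h
    push_neg at h
    have := hlt (e.symm v) h
    rw [e.apply_symm_apply] at this
    exact (Finset.mem_compl.mp hv) this
  by_cases hcase : m.val + 2 < Fintype.card V
  · -- the split Y = prefix of length m+1
    set Y := (Finset.univ.filter fun j : Fin (Fintype.card V) => j.val < m.val + 1).image e
      with hYdef
    have hfi : (Finset.univ.filter fun j : Fin (Fintype.card V) => j.val < m.val + 1)
        = Finset.Iic m := by
      ext j
      simp only [Finset.mem_filter, Finset.mem_univ, true_and, Finset.mem_Iic, Fin.le_def]
      omega
    have hmY : e m ∈ Y := (memP e _ _).2 (by simp)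
    have h0Y : e ⟨0, hpos⟩ ∈ Y := (memP e _ _).2 (by simp)
    set l : Fin (Fintype.card V) := ⟨Fintype.card V - 1, by omega⟩ with hldef
    set l' : Fin (Fintype.card V) := ⟨m.val + 1, by omega⟩ with hl'def
    have hlval : (l : ℕ) = Fintype.card V - 1 := rfl
    have hl'val : (l' : ℕ) = m.val + 1 := rfl
    have hlY : e l ∉ Y := by
      rw [memP, e.symm_apply_apply]
      omega
    have hl'Y : e l' ∉ Y := by
      rw [memP, e.symm_apply_apply]
      omega
    have hsplit : IsSplit G Y := by
      refine ⟨?_, ?_, ?_⟩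
      · exact Finset.one_lt_card.2 ⟨e ⟨0, hpos⟩, h0Y, e m, hmY, fun h => by
          have := congrArg Fin.val (e.injective h); simp at this; omega⟩
      · refine Finset.one_lt_card.2
          ⟨e l, Finset.mem_compl.2 hlY, e l', Finset.mem_compl.2 hl'Y, fun h => ?_⟩
        have := congrArg Fin.val (e.injective h)
        rw [hlval, hl'val] at this
        omega
      · refine le_antisymm (by rw [hYdef, hfi]; exact h1 m) ?_
        exact Nat.one_le_iff_ne_zero.2
          (cutrk_pos hG Y ⟨e m, hmY⟩ ⟨e l, Finset.mem_compl.2 hlY⟩)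
    have hYX : Y ≠ X := fun h => hmX (h ▸ hmY)
    have hYXc : Y ≠ Xᶜ := fun h => (Finset.mem_compl.mp (h ▸ h0Y)) h0
    have hno := hstr Y hsplit hYX hYXc
    by_cases hb : (X \ Y).Nonempty
    · exfalso
      have hd : ¬ (Xᶜ ∩ Yᶜ).Nonempty := fun hd =>
        hno ⟨⟨e ⟨0, hpos⟩, Finset.mem_inter.2 ⟨h0, h0Y⟩⟩, hb,
          ⟨e m, Finset.mem_sdiff.2 ⟨hmY, hmX⟩⟩, hd⟩
      rw [Finset.not_nonempty_iff_eq_empty] at hd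
      have hsub : Xᶜ ⊆ {e m} := by
        intro v hv
        have hvY : v ∈ Y := by
          by_contra h
          exact (Finset.eq_empty_iff_forall_notMem.mp hd v)
            (Finset.mem_inter.2 ⟨hv, Finset.mem_compl.2 h⟩)
        rw [memP] at hvY
        have hge := hXc_sub v hv
        have hsym : e.symm v = m := Fin.ext (by omega)
        rw [Finset.mem_singleton, ← hsym, e.apply_symm_apply]
      have := Finset.card_le_card hsub
      simp at this
      omega
    · rw [Finset.not_nonempty_iff_eq_empty, Finset.sdiff_eq_empty_iff_subset] at hb
      have hXQ : (Finset.univ.filter fun j : Fin (Fintype.card V) =>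
          j.val < m.val).image e = X := by
        refine Finset.Subset.antisymm hQX ?_
        intro v hv
        have hvY := hb hv
        rw [memP] at hvY
        rw [memP]
        rcases Nat.lt_or_ge (e.symm v).val m.val with h | h
        · exact h
        · exfalso
          have hsym : e.symm v = m := Fin.ext (by omega)
          apply hmX
          rw [← hsym, e.apply_symm_apply]
          exact hv
      refine ⟨m.val, ?_, m.isLt, hXQ⟩
      have hc := cardP_le e m.val
      rw [hXQ] at hc
      omega
  · -- m is near the end of the ordering
    set l : Fin (Fintype.card V) := ⟨Fintype.card V - 1, by omega⟩ with hldef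
    have hml : m.val = Fintype.card V - 1 ∨ m.val = Fintype.card V - 2 := by
      have := m.isLt
      omega
    rcases hml with hm1 | hm2
    · exfalso
      have hsub : Xᶜ ⊆ {e m} := by
        intro v hv
        have hge := hXc_sub v hv
        have hlt' := (e.symm v).isLt
        have hsym : e.symm v = m := Fin.ext (by omega)
        rw [Finset.mem_singleton, ← hsym, e.apply_symm_apply]
      have := Finset.card_le_card hsub
      simp at this
      omega
    · have hsub : Xᶜ ⊆ {e m, e l} := by
        intro v hv
        have hge := hXc_sub v hv
        have hlt' := (e.symm v).isLt
        rcases (by omega : (e.symm v).val = m.val ∨ (e.symm v).val = Fintype.card V - 1)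
          with h | h
        · have hsym : e.symm v = m := Fin.ext h
          rw [Finset.mem_insert, ← hsym, e.apply_symm_apply]
          exact Or.inl rfl
        · have hsym : e.symm v = l := Fin.ext (by rw [hldef]; exact h)
          rw [Finset.mem_insert, Finset.mem_singleton, ← hsym, e.apply_symm_apply]
          exact Or.inr rfl
      have hXc_eq : Xᶜ = {e m, e l} := by
        refine Finset.eq_of_subset_of_card_le hsub (le_trans ?_ hXc2)
        exact le_trans (Finset.card_insert_le _ _) (by simp)
      have hXQ : (Finset.univ.filter fun j : Fin (Fintype.card V) =>
          j.val < m.val).image e = X := by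
        refine Finset.Subset.antisymm hQX ?_
        intro v hv
        rw [memP]
        by_contra h
        push_neg at h
        have hlt' := (e.symm v).isLt
        have : v ∈ Xᶜ := by
          rw [hXc_eq]
          rcases (by omega : (e.symm v).val = m.val ∨ (e.symm v).val = Fintype.card V - 1)
            with h' | h'
          · have hsym : e.symm v = m := Fin.ext h'
            rw [Finset.mem_insert, ← hsym, e.apply_symm_apply]
            exact Or.inl rfl
          · have hsym : e.symm v = l := Fin.ext (by rw [hldef]; exact h')
            rw [Finset.mem_insert, Finset.mem_singleton, ← hsym, e.apply_symm_apply]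
            exact Or.inr rfl
        exact (Finset.mem_compl.mp this) hv
      exact ⟨m.val, by omega, m.isLt, hXQ⟩


theorem stmt14 (G : SimpleGraph V) (hG : G.Connected)
    (e : Fin (Fintype.card V) ≃ V)
    (h1 : ∀ i : Fin (Fintype.card V), cutrk G ((Finset.Iic i).image e) ≤ 1)
    (X : Finset V) (hX : IsStrongSplit G X) :
    ∃ k : ℕ, 1 < k ∧ k < Fintype.card V ∧
      ((Finset.univ.filter fun j : Fin (Fintype.card V) => j.val < k).image e = X ∨
       (Finset.univ.filter fun j : Fin (Fintype.card V) => j.val < k).image e = Xᶜ) := by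
  obtain ⟨⟨hX2, hXc2, _⟩, hstr⟩ := hX
  have hpos : 0 < Fintype.card V := by
    have := Finset.card_add_card_compl X
    omega
  by_cases h0 : e ⟨0, hpos⟩ ∈ X
  · obtain ⟨k, hk1, hk2, hk3⟩ := key G hG e h1 X hX2 hXc2 hstr hpos h0
    exact ⟨k, hk1, hk2, Or.inl hk3⟩
  · have hstr' : ∀ Y : Finset V, IsSplit G Y → Y ≠ Xᶜ → Y ≠ Xᶜᶜ → ¬ Overlap Xᶜ Y := by
      intro Y hY hY1 hY2 hov
      refine hstr Y hY (by rwa [compl_compl] at hY2) hY1 ?_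
      have := overlap_compl_left hov
      rwa [compl_compl] at this
    obtain ⟨k, hk1, hk2, hk3⟩ := key G hG e h1 Xᶜ hXc2 (by rwa [compl_compl]) hstr' hpos
      (Finset.mem_compl.2 h0)
    exact ⟨k, hk1, hk2, Or.inr hk3⟩
end

section
/- The cut-rank function of a graph is submodular: for all X, Y ⊆ V(G), cutrk(X) + cutrk(Y) ≥ cutrk(X ∩ Y) + cutrk(X ∪ Y). -/
/-!
The rank of a submatrix `M[R, C]` is the dimension of the image of the row space
`W_R = ⟨M_r : r ∈ R⟩` under restriction to the columns `C`, that is `dim W_R - dim (W_R ∩ Z_C)`,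
where `Z_C` is the space of vectors vanishing on `C`. Now `W_{R₁ ∪ R₂} = W_{R₁} + W_{R₂}`,
`W_{R₁ ∩ R₂} ≤ W_{R₁} ∩ W_{R₂}`, `Z_{C₁ ∪ C₂} = Z_{C₁} ∩ Z_{C₂}` and `Z_{C₁} + Z_{C₂} ≤ Z_{C₁ ∩ C₂}`,
so the modular law `dim (P + Q) + dim (P ∩ Q) = dim P + dim Q`, applied to the row spaces and to
the `W_{Rᵢ} ∩ Z_{Cᵢ}`, makes `(R, C) ↦ rank M[R, C]` submodular. The cut-rank is the case
`C = Rᶜ`, since `(X ∩ Y)ᶜ = Xᶜ ∪ Yᶜ` and `(X ∪ Y)ᶜ = Xᶜ ∩ Yᶜ`.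
-/

open scoped Classical

variable {V : Type*} [Fintype V] [DecidableEq V]

open Module

namespace Submodule

variable {K E : Type*} [Field K] [AddCommGroup E] [Module K E] [FiniteDimensional K E]

theorem finrank_map_add_finrank_inf_ker {F : Type*} [AddCommGroup F] [Module K F]
    (f : E →ₗ[K] F) (p : Submodule K E) :
    finrank K (p.map f) + finrank K ↥(p ⊓ LinearMap.ker f) = finrank K p := by
  have h := LinearMap.finrank_range_add_finrank_ker (f.domRestrict p)
  rwa [LinearMap.range_domRestrict, LinearMap.ker_domRestrict,
    (equivSubtypeMap p ((LinearMap.ker f).comap p.subtype)).finrank_eq, map_comap_subtype] at h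

theorem finrank_map_inf_add_finrank_map_sup_le {F₁ F₂ G H : Type*}
    [AddCommGroup F₁] [Module K F₁] [AddCommGroup F₂] [Module K F₂]
    [AddCommGroup G] [Module K G] [AddCommGroup H] [Module K H]
    (A B : Submodule K E) (f₁ : E →ₗ[K] F₁) (f₂ : E →ₗ[K] F₂) (g : E →ₗ[K] G) (h : E →ₗ[K] H)
    (hg : LinearMap.ker f₁ ⊓ LinearMap.ker f₂ ≤ LinearMap.ker g)
    (hh₁ : LinearMap.ker f₁ ≤ LinearMap.ker h) (hh₂ : LinearMap.ker f₂ ≤ LinearMap.ker h) :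
    finrank K ((A ⊓ B).map g) + finrank K ((A ⊔ B).map h) ≤
      finrank K (A.map f₁) + finrank K (B.map f₂) := by
  have hPQ_inf : finrank K ↥(A ⊓ LinearMap.ker f₁ ⊓ (B ⊓ LinearMap.ker f₂)) ≤
      finrank K ↥(A ⊓ B ⊓ LinearMap.ker g) :=
    finrank_mono <| le_inf (inf_le_inf inf_le_left inf_le_left)
      ((inf_le_inf inf_le_right inf_le_right).trans hg)
  have hPQ_sup : finrank K ↥(A ⊓ LinearMap.ker f₁ ⊔ B ⊓ LinearMap.ker f₂) ≤
      finrank K ↥((A ⊔ B) ⊓ LinearMap.ker h) :=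
    finrank_mono <| le_inf (sup_le_sup inf_le_left inf_le_left)
      (sup_le (inf_le_right.trans hh₁) (inf_le_right.trans hh₂))
  have rank_nullity_g := finrank_map_add_finrank_inf_ker g (A ⊓ B)
  have rank_nullity_h := finrank_map_add_finrank_inf_ker h (A ⊔ B)
  have rank_nullity_f₁ := finrank_map_add_finrank_inf_ker f₁ A
  have rank_nullity_f₂ := finrank_map_add_finrank_inf_ker f₂ B
  have modular_AB := finrank_sup_add_finrank_inf_eq A B
  have modular_PQ := finrank_sup_add_finrank_inf_eq (A ⊓ LinearMap.ker f₁) (B ⊓ LinearMap.ker f₂)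
  omega

end Submodule

namespace Matrix

variable {m n K : Type*} [Field K]

theorem mem_ker_funLeft_subtypeVal {s : Finset n} {v : n → K} :
    v ∈ LinearMap.ker (LinearMap.funLeft K K ((↑) : s → n)) ↔ ∀ i ∈ s, v i = 0 := by
  simp [funext_iff, LinearMap.funLeft_apply]

theorem ker_funLeft_subtypeVal_antitone {s t : Finset n} (h : s ⊆ t) :
    LinearMap.ker (LinearMap.funLeft K K ((↑) : t → n)) ≤
      LinearMap.ker (LinearMap.funLeft K K ((↑) : s → n)) := fun _ hv =>
  mem_ker_funLeft_subtypeVal.2 fun i hi => mem_ker_funLeft_subtypeVal.1 hv i (h hi)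

theorem ker_funLeft_subtypeVal_union [DecidableEq n] (s t : Finset n) :
    LinearMap.ker (LinearMap.funLeft K K ((↑) : ↥(s ∪ t) → n)) =
      LinearMap.ker (LinearMap.funLeft K K ((↑) : s → n)) ⊓
        LinearMap.ker (LinearMap.funLeft K K ((↑) : t → n)) := by
  ext v
  simp only [Submodule.mem_inf, mem_ker_funLeft_subtypeVal, Finset.mem_union, or_imp, forall_and]

theorem rank_submatrix_subtypeVal (M : Matrix m n K) (R : Finset m) (C : Finset n) :
    (M.submatrix ((↑) : R → m) ((↑) : C → n)).rank =
      finrank K ((Submodule.span K (M.row '' R)).map (LinearMap.funLeft K K ((↑) : C → n))) := by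
  rw [rank_eq_finrank_span_row, Submodule.map_span, ← Set.image_comp, Set.image_eq_range]
  rfl

variable [Finite n] [DecidableEq m] [DecidableEq n]

theorem rank_submatrix_inter_union_add_le (M : Matrix m n K) (R₁ R₂ : Finset m) (C₁ C₂ : Finset n) :
    (M.submatrix ((↑) : ↥(R₁ ∩ R₂) → m) ((↑) : ↥(C₁ ∪ C₂) → n)).rank +
        (M.submatrix ((↑) : ↥(R₁ ∪ R₂) → m) ((↑) : ↥(C₁ ∩ C₂) → n)).rank ≤
      (M.submatrix ((↑) : R₁ → m) ((↑) : C₁ → n)).rank +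
        (M.submatrix ((↑) : R₂ → m) ((↑) : C₂ → n)).rank := by
  simp only [rank_submatrix_subtypeVal]
  have hrows : Submodule.span K (M.row '' ↑(R₁ ∪ R₂)) =
      Submodule.span K (M.row '' R₁) ⊔ Submodule.span K (M.row '' R₂) := by
    rw [Finset.coe_union, Set.image_union, Submodule.span_union]
  have hrows_inter : Submodule.span K (M.row '' ↑(R₁ ∩ R₂)) ≤
      Submodule.span K (M.row '' R₁) ⊓ Submodule.span K (M.row '' R₂) :=
    le_inf (Submodule.span_mono (Set.image_mono (by simp)))
      (Submodule.span_mono (Set.image_mono (by simp)))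
  rw [hrows]
  exact (Nat.add_le_add_right (Submodule.finrank_mono (Submodule.map_mono hrows_inter)) _).trans <|
    Submodule.finrank_map_inf_add_finrank_map_sup_le _ _ _ _ _ _
      (ker_funLeft_subtypeVal_union C₁ C₂).ge
      (ker_funLeft_subtypeVal_antitone Finset.inter_subset_left)
      (ker_funLeft_subtypeVal_antitone Finset.inter_subset_right)

end Matrix

theorem cutrk_eq_rank_adjMatrix_submatrix (G : SimpleGraph V) (X : Finset V) :
    cutrk G X = ((G.adjMatrix (ZMod 2)).submatrix ((↑) : X → V) ((↑) : ↥Xᶜ → V)).rank :=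
  rfl

theorem stmt19 (G : SimpleGraph V) (X Y : Finset V) :
    cutrk G (X ∩ Y) + cutrk G (X ∪ Y) ≤ cutrk G X + cutrk G Y := by
  have h := (G.adjMatrix (ZMod 2)).rank_submatrix_inter_union_add_le X Y Xᶜ Yᶜ
  rw [← Finset.compl_inter, ← Finset.compl_union] at h
  simpa only [cutrk_eq_rank_adjMatrix_submatrix] using h
end
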